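/- arXiv:2108.11721 — 7 statements merged into one kernel-verified Lean document; each statement's English description precedes it below -/
import Mathlib

section
/- Let P be a finite set and let S₁, S₂, S₃, S₄ be four distinct subsets of P whose indicator vectors e_{S₁}, e_{S₂}, e_{S₃}, e_{S₄} ∈ ℝ^P all lie on a common two-dimensional affine plane. Then, after suitable relabeling of S₂, S₃, S₄, we have e_{S₄} − e_{S₁} = (e_{S₂} − e_{S₁}) + (e_{S₃} − e_{S₁}) and (e_{S₂} − e_{S₁}) · (e_{S₃} − e_{S₁}) = 0; hence conv(e_{S₁}, e_{S₂}, e_{S₃}, e_{S₄}) is a rectangle. -/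
noncomputable def indVec {P : Type*} (C : Set P) : P → ℝ := C.indicator 1

lemma indVec01 {P : Type*} (C : Set P) (x : P) : indVec C x = 0 ∨ indVec C x = 1 := by
  by_cases h : x ∈ C <;> simp [indVec, Set.indicator_apply, h]

lemma indVec_ne {P : Type*} {C D : Set P} (h : C ≠ D) : indVec C ≠ indVec D := by
  intro hEq
  apply h
  ext x
  have h' := congrFun hEq x
  by_cases hc : x ∈ C <;> by_cases hd : x ∈ D <;>
    simp [indVec, Set.indicator_apply, hc, hd] at h' ⊢ <;> tauto

lemma aux2 {P : Type*} (u v w : P → ℝ)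
    (hu : ∀ x, u x = 0 ∨ u x = 1) (hv : ∀ x, v x = 0 ∨ v x = 1)
    (hw : ∀ x, w x = 0 ∨ w x = 1) (huv : u ≠ v)
    (a b : ℝ) (ha : a ≠ 0) (hb : b ≠ 0)
    (h : ∀ x, a * (u x - w x) + b * (v x - w x) = 0) : False := by
  obtain ⟨x, hx⟩ : ∃ x, u x ≠ v x := by
    by_contra hcon
    push_neg at hcon
    exact huv (funext hcon)
  have hx' := h x
  rcases hu x with h1 | h1 <;> rcases hv x with h2 | h2 <;> rcases hw x with h3 | h3 <;>
    rw [h1, h2, h3] at hx' <;>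
    first
      | exact hx (h1.trans h2.symm)
      | exact ha (by linarith)
      | exact hb (by linarith)

lemma sep (a b c d p q r s : ℝ) (ha : a ≠ 0) (hb : b ≠ 0) (hc : c ≠ 0) (hd : d ≠ 0)
    (hsum : a + b + c + d = 0)
    (hp : p = 0 ∨ p = 1) (hq : q = 0 ∨ q = 1) (hr : r = 0 ∨ r = 1) (hs : s = 0 ∨ s = 1)
    (hqr : q ≠ r) (heq : a * p + b * q + c * r + d * s = 0) :
    a + b = 0 ∨ a + c = 0 := by
  rcases hp with h1 | h1 <;> rcases hq with h2 | h2 <;> rcases hr with h3 | h3 <;>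
    rcases hs with h4 | h4 <;>
    rw [h1] at heq <;> rw [h2] at heq hqr <;> rw [h3] at heq hqr <;> rw [h4] at heq <;>
    first
      | exact absurd rfl hqr
      | exact absurd (show a = 0 by linarith) ha
      | exact absurd (show b = 0 by linarith) hb
      | exact absurd (show c = 0 by linarith) hc
      | exact absurd (show d = 0 by linarith) hd
      | (left; linarith)
      | (right; linarith)

lemma final {P : Type*} [Fintype P] (v₁ u w z : P → ℝ)
    (h1 : ∀ x, v₁ x = 0 ∨ v₁ x = 1) (hu : ∀ x, u x = 0 ∨ u x = 1)
    (hw : ∀ x, w x = 0 ∨ w x = 1) (hz : ∀ x, z x = 0 ∨ z x = 1)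
    (heq : ∀ x, v₁ x - u x - w x + z x = 0) :
    z - v₁ = (u - v₁) + (w - v₁) ∧ ∑ x, (u x - v₁ x) * (w x - v₁ x) = 0 := by
  constructor
  · funext x
    have hx := heq x
    simp only [Pi.sub_apply, Pi.add_apply]
    linarith
  · apply Finset.sum_eq_zero
    intro x _
    have hx := heq x
    rcases h1 x with a1 | a1 <;> rcases hu x with b1 | b1 <;> rcases hw x with c1 | c1 <;>
      rcases hz x with d1 | d1 <;>
      rw [a1, b1, c1, d1] at hx <;> rw [a1, b1, c1] <;>
      first
        | (exfalso; linarith)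
        | norm_num

set_option maxHeartbeats 1000000 in
theorem stmt_8 {P : Type*} [Fintype P] (S₁ S₂ S₃ S₄ : Set P)
    (hdist : [S₁, S₂, S₃, S₄].Pairwise (· ≠ ·))
    (plane : AffineSubspace ℝ (P → ℝ))
    (hdim : Module.finrank ℝ plane.direction = 2)
    (h1 : indVec S₁ ∈ plane) (h2 : indVec S₂ ∈ plane)
    (h3 : indVec S₃ ∈ plane) (h4 : indVec S₄ ∈ plane) :
    ∃ T₂ T₃ T₄ : Set P, ({T₂, T₃, T₄} : Set (Set P)) = {S₂, S₃, S₄} ∧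
      indVec T₄ - indVec S₁ = (indVec T₂ - indVec S₁) + (indVec T₃ - indVec S₁) ∧
      ∑ x, (indVec T₂ x - indVec S₁ x) * (indVec T₃ x - indVec S₁ x) = 0 := by
  rcases hdist with _ | ⟨hh1, hdist⟩
  rcases hdist with _ | ⟨hh2, hdist⟩
  rcases hdist with _ | ⟨hh3, -⟩
  have h12 : S₁ ≠ S₂ := hh1 S₂ (by simp)
  have h13 : S₁ ≠ S₃ := hh1 S₃ (by simp)
  have h14 : S₁ ≠ S₄ := hh1 S₄ (by simp)
  have h23 : S₂ ≠ S₃ := hh2 S₃ (by simp)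
  have h24 : S₂ ≠ S₄ := hh2 S₄ (by simp)
  have h34 : S₃ ≠ S₄ := hh3 S₄ (by simp)
  set v₁ := indVec S₁ with hv₁
  set v₂ := indVec S₂ with hv₂
  set v₃ := indVec S₃ with hv₃
  set v₄ := indVec S₄ with hv₄
  have o₁ := indVec01 S₁
  have o₂ := indVec01 S₂
  have o₃ := indVec01 S₃
  have o₄ := indVec01 S₄
  have n12 : v₁ ≠ v₂ := indVec_ne h12
  have n13 : v₁ ≠ v₃ := indVec_ne h13
  have n14 : v₁ ≠ v₄ := indVec_ne h14
  have n23 : v₂ ≠ v₃ := indVec_ne h23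
  have n24 : v₂ ≠ v₄ := indVec_ne h24
  have n34 : v₃ ≠ v₄ := indVec_ne h34
  have hd2 : v₂ - v₁ ∈ plane.direction := by
    simpa using AffineSubspace.vsub_mem_direction h2 h1
  have hd3 : v₃ - v₁ ∈ plane.direction := by
    simpa using AffineSubspace.vsub_mem_direction h3 h1
  have hd4 : v₄ - v₁ ∈ plane.direction := by
    simpa using AffineSubspace.vsub_mem_direction h4 h1
  have hnli : ¬ LinearIndependent ℝ
      ![(⟨v₂ - v₁, hd2⟩ : plane.direction), ⟨v₃ - v₁, hd3⟩, ⟨v₄ - v₁, hd4⟩] := by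
    intro hli
    have hcard := hli.fintype_card_le_finrank
    rw [hdim] at hcard
    norm_num at hcard
  rw [Fintype.not_linearIndependent_iff] at hnli
  obtain ⟨g, hg, i, hgi⟩ := hnli
  set c2 := g 0 with hc2def
  set c3 := g 1 with hc3def
  set c4 := g 2 with hc4def
  have hsum0 : c2 • (v₂ - v₁) + c3 • (v₃ - v₁) + c4 • (v₄ - v₁) = 0 := by
    have hval := congrArg (Subtype.val) hg
    simpa [Fin.sum_univ_three] using hval
  have hEq : ∀ x, c2 * (v₂ x - v₁ x) + c3 * (v₃ x - v₁ x) + c4 * (v₄ x - v₁ x) = 0 := by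
    intro x
    have := congrFun hsum0 x
    simpa [Pi.sub_apply, smul_eq_mul] using this
  have hnz : ¬(c2 = 0 ∧ c3 = 0 ∧ c4 = 0) := by
    rintro ⟨e2, e3, e4⟩
    fin_cases i <;> simp_all
  -- all coefficients nonzero
  have eq_of_single : ∀ (c : ℝ) (u : P → ℝ), c ≠ 0 → (∀ x, c * (u x - v₁ x) = 0) →
      u = v₁ := by
    intro c u hc h
    funext x
    have := h x
    have : u x - v₁ x = 0 := by
      rcases mul_eq_zero.1 this with h' | h'
      · exact absurd h' hc
      · exact h'
    linarith
  have hc2 : c2 ≠ 0 := by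
    intro e2
    by_cases e3 : c3 = 0
    · by_cases e4 : c4 = 0
      · exact hnz ⟨e2, e3, e4⟩
      · refine n14 (eq_of_single c4 v₄ e4 ?_).symm
        intro y
        have hy := hEq y
        rw [e2, e3] at hy
        linarith
    · by_cases e4 : c4 = 0
      · refine n13 (eq_of_single c3 v₃ e3 ?_).symm
        intro y
        have hy := hEq y
        rw [e2, e4] at hy
        linarith
      · refine aux2 v₃ v₄ v₁ o₃ o₄ o₁ n34 c3 c4 e3 e4 ?_
        intro y
        have hy := hEq y
        rw [e2] at hy
        linarith
  have hc3 : c3 ≠ 0 := by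
    intro e3
    by_cases e4 : c4 = 0
    · refine n12 (eq_of_single c2 v₂ hc2 ?_).symm
      intro y
      have hy := hEq y
      rw [e3, e4] at hy
      linarith
    · refine aux2 v₂ v₄ v₁ o₂ o₄ o₁ n24 c2 c4 hc2 e4 ?_
      intro y
      have hy := hEq y
      rw [e3] at hy
      linarith
  have hc4 : c4 ≠ 0 := by
    intro e4
    refine aux2 v₂ v₃ v₁ o₂ o₃ o₁ n23 c2 c3 hc2 hc3 ?_
    intro y
    have hy := hEq y
    rw [e4] at hy
    linarith
  have hsumne : c2 + c3 + c4 ≠ 0 := by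
    intro hs
    have hc4e : c4 = -c2 - c3 := by linarith
    apply aux2 v₂ v₃ v₄ o₂ o₃ o₄ n23 c2 c3 hc2 hc3
    intro x
    have hx := hEq x
    rw [hc4e] at hx
    linear_combination hx
  set a := -(c2 + c3 + c4) with hadef
  have ha : a ≠ 0 := by
    rw [hadef]; intro h; apply hsumne; linarith
  have hABCD : a + c2 + c3 + c4 = 0 := by rw [hadef]; ring
  have hEq' : ∀ x, a * v₁ x + c2 * v₂ x + c3 * v₃ x + c4 * v₄ x = 0 := by
    intro x
    rw [hadef]
    linear_combination hEq x
  have exdiff : ∀ u w : P → ℝ, u ≠ w → ∃ x, u x ≠ w x := by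
    intro u w h
    by_contra hcon
    push_neg at hcon
    exact h (funext hcon)
  have s23 : a + c2 = 0 ∨ a + c3 = 0 := by
    obtain ⟨x, hx⟩ := exdiff v₂ v₃ n23
    exact sep a c2 c3 c4 (v₁ x) (v₂ x) (v₃ x) (v₄ x) ha hc2 hc3 hc4 hABCD
      (o₁ x) (o₂ x) (o₃ x) (o₄ x) hx (hEq' x)
  have s24 : a + c2 = 0 ∨ a + c4 = 0 := by
    obtain ⟨x, hx⟩ := exdiff v₂ v₄ n24
    exact sep a c2 c4 c3 (v₁ x) (v₂ x) (v₄ x) (v₃ x) ha hc2 hc4 hc3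
      (by linarith) (o₁ x) (o₂ x) (o₄ x) (o₃ x) hx (by linear_combination hEq' x)
  have s34 : a + c3 = 0 ∨ a + c4 = 0 := by
    obtain ⟨x, hx⟩ := exdiff v₃ v₄ n34
    exact sep a c3 c4 c2 (v₁ x) (v₃ x) (v₄ x) (v₂ x) ha hc3 hc4 hc2
      (by linarith) (o₁ x) (o₃ x) (o₄ x) (o₂ x) hx (by linear_combination hEq' x)
  have key : (a + c2 = 0 ∧ a + c3 = 0) ∨ (a + c2 = 0 ∧ a + c4 = 0) ∨
      (a + c3 = 0 ∧ a + c4 = 0) := by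
    rcases s23 with h | h
    · rcases s24 with h' | h'
      · rcases s34 with h'' | h''
        · exact Or.inl ⟨h, h''⟩
        · exact Or.inr (Or.inl ⟨h, h''⟩)
      · exact Or.inr (Or.inl ⟨h, h'⟩)
    · rcases s24 with h' | h'
      · exact Or.inl ⟨h', h⟩
      · exact Or.inr (Or.inr ⟨h, h'⟩)
  rcases key with ⟨k2, k3⟩ | ⟨k2, k4⟩ | ⟨k3, k4⟩
  · -- c2 = c3 = -a, c4 = a : v₄ - v₁ = (v₂-v₁)+(v₃-v₁)
    have hptw : ∀ x, v₁ x - v₂ x - v₃ x + v₄ x = 0 := by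
      intro x
      have hx := hEq' x
      have e2 : c2 = -a := by linarith
      have e3 : c3 = -a := by linarith
      have e4 : c4 = a := by linarith
      rw [e2, e3, e4] at hx
      have : a * (v₁ x - v₂ x - v₃ x + v₄ x) = a * 0 := by linear_combination hx
      exact mul_left_cancel₀ ha this
    obtain ⟨heq1, heq2⟩ := final v₁ v₂ v₃ v₄ o₁ o₂ o₃ o₄ hptw
    exact ⟨S₂, S₃, S₄, rfl, heq1, heq2⟩
  · -- c2 = c4 = -a, c3 = a : v₃ - v₁ = (v₂-v₁)+(v₄-v₁)
    have hptw : ∀ x, v₁ x - v₂ x - v₄ x + v₃ x = 0 := by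
      intro x
      have hx := hEq' x
      have e2 : c2 = -a := by linarith
      have e4 : c4 = -a := by linarith
      have e3 : c3 = a := by linarith
      rw [e2, e3, e4] at hx
      have : a * (v₁ x - v₂ x - v₄ x + v₃ x) = a * 0 := by linear_combination hx
      exact mul_left_cancel₀ ha this
    obtain ⟨heq1, heq2⟩ := final v₁ v₂ v₄ v₃ o₁ o₂ o₄ o₃ hptw
    refine ⟨S₂, S₄, S₃, ?_, heq1, heq2⟩
    rw [Set.pair_comm S₄ S₃]
  · -- c3 = c4 = -a, c2 = a : v₂ - v₁ = (v₃-v₁)+(v₄-v₁)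
    have hptw : ∀ x, v₁ x - v₃ x - v₄ x + v₂ x = 0 := by
      intro x
      have hx := hEq' x
      have e3 : c3 = -a := by linarith
      have e4 : c4 = -a := by linarith
      have e2 : c2 = a := by linarith
      rw [e2, e3, e4] at hx
      have : a * (v₁ x - v₃ x - v₄ x + v₂ x) = a * 0 := by linear_combination hx
      exact mul_left_cancel₀ ha this
    obtain ⟨heq1, heq2⟩ := final v₁ v₃ v₄ v₂ o₁ o₃ o₄ o₂ hptw
    refine ⟨S₃, S₄, S₂, ?_, heq1, heq2⟩
    rw [Set.pair_comm S₄ S₂, Set.insert_comm S₃ S₂]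
end

section
/- Let P be a finite poset and C₁, C₂ two distinct maximal chains of P. Suppose there exist α₁, β₁ ∈ C₁ and α₂, β₂ ∈ C₂ with α₁ ⋖ β₁ in P, α₂ ⋖ β₂ in P, α₁ ⋖ β₂ in P, α₂ ⋖ β₁ in P, α₁ ≠ α₂ and β₁ ≠ β₂ (a guided 2-crown for {C₁, C₂}). Then conv(e_{C₁}, e_{C₂}) is not an edge of 𝓜(P), i.e., it is not a 1-dimensional face of 𝓜(P). -/
noncomputable def maxChainPolytope (P : Type*) [PartialOrder P] : Set (P → ℝ) :=
  convexHull ℝ (indVec '' {C : Set P | IsMaxChain (· ≤ ·) C})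

lemma indVec_inj {P : Type*} {C C' : Set P} (h : indVec C = indVec C') : C = C' := by
  ext p
  have := congrFun h p
  constructor
  · intro hp; by_contra hq
    simp [indVec, Set.indicator_of_mem hp, Set.indicator_of_notMem hq] at this
  · intro hp; by_contra hq
    simp [indVec, Set.indicator_of_notMem hq, Set.indicator_of_mem hp] at this

lemma chain_split {P : Type*} [PartialOrder P] {C : Set P}
    (hC : IsMaxChain (· ≤ ·) C) {α β : P} (hα : α ∈ C) (hβ : β ∈ C) (hc : α ⋖ β) :
    C = {z ∈ C | z ≤ α} ∪ {z ∈ C | β ≤ z} := by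
  ext z
  constructor
  · intro hz
    rcases eq_or_ne z α with rfl | hzα
    · exact Or.inl ⟨hz, le_refl _⟩
    rcases hC.1 hz hα hzα with h | h
    · exact Or.inl ⟨hz, h⟩
    rcases eq_or_ne z β with rfl | hzβ
    · exact Or.inr ⟨hz, le_refl _⟩
    rcases hC.1 hz hβ hzβ with h' | h'
    · exact (hc.2 (lt_of_le_of_ne h (Ne.symm hzα)) (lt_of_le_of_ne h' hzβ)).elim
    · exact Or.inr ⟨hz, h'⟩
  · rintro (⟨h, -⟩ | ⟨h, -⟩) <;> exact h

lemma isMaxChain_cut {P : Type*} [PartialOrder P] {C₁ C₂ : Set P}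
    (hC₁ : IsMaxChain (· ≤ ·) C₁) (hC₂ : IsMaxChain (· ≤ ·) C₂)
    {α β : P} (hα : α ∈ C₁) (hβ : β ∈ C₂) (hc : α ⋖ β) :
    IsMaxChain (· ≤ ·) ({z ∈ C₁ | z ≤ α} ∪ {z ∈ C₂ | β ≤ z}) := by
  constructor
  · rintro x (⟨hx1, hxa⟩ | ⟨hx2, hxb⟩) y (⟨hy1, hya⟩ | ⟨hy2, hyb⟩) hxy
    · exact hC₁.1 hx1 hy1 hxy
    · exact Or.inl (hxa.trans (hc.le.trans hyb))
    · exact Or.inr (hya.trans (hc.le.trans hxb))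
    · exact hC₂.1 hx2 hy2 hxy
  · intro t ht hsub
    refine Set.Subset.antisymm hsub fun x hx => ?_
    have hαt : α ∈ t := hsub (Or.inl ⟨hα, le_refl α⟩)
    have hβt : β ∈ t := hsub (Or.inr ⟨hβ, le_refl β⟩)
    rcases eq_or_ne x α with rfl | hxα
    · exact Or.inl ⟨hα, le_refl _⟩
    rcases ht hx hαt hxα with hxa | hax
    · -- x ≤ α : x joins C₁
      have hchain : IsChain (· ≤ ·) (insert x C₁) := by
        refine hC₁.1.insert fun b hb hbx => ?_
        rcases eq_or_ne b α with rfl | hbα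
        · exact Or.inl hxa
        rcases hC₁.1 hb hα hbα with hba | hab
        · exact ht hx (hsub (Or.inl ⟨hb, hba⟩)) hbx
        · exact Or.inl (hxa.trans hab)
      have hxC : x ∈ C₁ := by
        have := hC₁.2 hchain (Set.subset_insert x C₁)
        rw [this]; exact Set.mem_insert x C₁
      exact Or.inl ⟨hxC, hxa⟩
    · rcases eq_or_ne x β with rfl | hxβ
      · exact Or.inr ⟨hβ, le_refl _⟩
      rcases ht hx hβt hxβ with hxb | hbx
      · exact (hc.2 (lt_of_le_of_ne hax (Ne.symm hxα)) (lt_of_le_of_ne hxb hxβ)).elim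
      · -- β ≤ x : x joins C₂
        have hchain : IsChain (· ≤ ·) (insert x C₂) := by
          refine hC₂.1.insert fun b hb hbx2 => ?_
          rcases eq_or_ne b β with rfl | hbβ
          · exact Or.inr hbx
          rcases hC₂.1 hb hβ hbβ with hbb | hbb
          · exact Or.inr (hbb.trans hbx)
          · exact ht hx (hsub (Or.inr ⟨hb, hbb⟩)) hbx2
        have hxC : x ∈ C₂ := by
          have := hC₂.2 hchain (Set.subset_insert x C₂)
          rw [this]; exact Set.mem_insert x C₂
        exact Or.inr ⟨hxC, hbx⟩

theorem stmt_11 {P : Type*} [Fintype P] [PartialOrder P]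
    (C₁ C₂ : Set P) (hC₁ : IsMaxChain (· ≤ ·) C₁) (hC₂ : IsMaxChain (· ≤ ·) C₂)
    (hne : C₁ ≠ C₂) (α₁ β₁ α₂ β₂ : P)
    (hα₁ : α₁ ∈ C₁) (hβ₁ : β₁ ∈ C₁) (hα₂ : α₂ ∈ C₂) (hβ₂ : β₂ ∈ C₂)
    (h11 : α₁ ⋖ β₁) (h22 : α₂ ⋖ β₂) (h12 : α₁ ⋖ β₂) (h21 : α₂ ⋖ β₁)
    (hαne : α₁ ≠ α₂) (hβne : β₁ ≠ β₂) :
    ¬ (IsExposed ℝ (maxChainPolytope P) (convexHull ℝ {indVec C₁, indVec C₂}) ∧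
        Module.finrank ℝ (vectorSpan ℝ ({indVec C₁, indVec C₂} : Set (P → ℝ))) = 1) := by
  rintro ⟨hexp, -⟩
  set L₁ : Set P := {z ∈ C₁ | z ≤ α₁} with hL₁
  set U₁ : Set P := {z ∈ C₁ | β₁ ≤ z} with hU₁
  set L₂ : Set P := {z ∈ C₂ | z ≤ α₂} with hL₂
  set U₂ : Set P := {z ∈ C₂ | β₂ ≤ z} with hU₂
  have d11 : Disjoint L₁ U₁ := by
    rw [Set.disjoint_left]; rintro z ⟨-, hz⟩ ⟨-, hz'⟩
    exact absurd (hz'.trans hz) h11.1.not_ge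
  have d22 : Disjoint L₂ U₂ := by
    rw [Set.disjoint_left]; rintro z ⟨-, hz⟩ ⟨-, hz'⟩
    exact absurd (hz'.trans hz) h22.1.not_ge
  have d12 : Disjoint L₁ U₂ := by
    rw [Set.disjoint_left]; rintro z ⟨-, hz⟩ ⟨-, hz'⟩
    exact absurd (hz'.trans hz) h12.1.not_ge
  have d21 : Disjoint L₂ U₁ := by
    rw [Set.disjoint_left]; rintro z ⟨-, hz⟩ ⟨-, hz'⟩
    exact absurd (hz'.trans hz) h21.1.not_ge
  set D₁ : Set P := L₁ ∪ U₂ with hD₁def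
  set D₂ : Set P := L₂ ∪ U₁ with hD₂def
  have hD₁ : IsMaxChain (· ≤ ·) D₁ := isMaxChain_cut hC₁ hC₂ hα₁ hβ₂ h12
  have hD₂ : IsMaxChain (· ≤ ·) D₂ := isMaxChain_cut hC₂ hC₁ hα₂ hβ₁ h21
  have hC1eq : C₁ = L₁ ∪ U₁ := chain_split hC₁ hα₁ hβ₁ h11
  have hC2eq : C₂ = L₂ ∪ U₂ := chain_split hC₂ hα₂ hβ₂ h22
  -- sum identity
  have hsum : indVec C₁ + indVec C₂ = indVec D₁ + indVec D₂ := by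
    funext p
    have e1 := congrFun (Set.indicator_union_of_disjoint d11 (1 : P → ℝ)) p
    have e2 := congrFun (Set.indicator_union_of_disjoint d22 (1 : P → ℝ)) p
    have e3 := congrFun (Set.indicator_union_of_disjoint d12 (1 : P → ℝ)) p
    have e4 := congrFun (Set.indicator_union_of_disjoint d21 (1 : P → ℝ)) p
    simp only [Pi.add_apply, indVec, hC1eq, hC2eq, hD₁def, hD₂def, e1, e2, e3, e4]
    ring
  -- elements witnessing distinctness
  have hβ₁D₁ : β₁ ∉ D₁ := by
    rintro (⟨-, hle⟩ | ⟨-, hle⟩)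
    · exact absurd hle h11.1.not_ge
    · exact h21.2 h22.1 (lt_of_le_of_ne hle hβne.symm)
  have hα₂D₁ : α₂ ∉ D₁ := by
    rintro (⟨-, hle⟩ | ⟨-, hle⟩)
    · exact h22.2 (lt_of_le_of_ne hle (Ne.symm hαne)) h12.1
    · exact absurd hle h22.1.not_ge
  have hD₁ne₁ : D₁ ≠ C₁ := fun h => hβ₁D₁ (h ▸ hβ₁)
  have hD₁ne₂ : D₁ ≠ C₂ := fun h => hα₂D₁ (h ▸ hα₂)
  -- exposedness
  have hC₁S : indVec C₁ ∈ convexHull ℝ {indVec C₁, indVec C₂} :=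
    subset_convexHull ℝ _ (Set.mem_insert _ _)
  have hC₂S : indVec C₂ ∈ convexHull ℝ {indVec C₁, indVec C₂} :=
    subset_convexHull ℝ _ (Set.mem_insert_of_mem _ rfl)
  obtain ⟨l, hl⟩ := hexp ⟨_, hC₁S⟩
  have memPoly : ∀ C : Set P, IsMaxChain (· ≤ ·) C → indVec C ∈ maxChainPolytope P :=
    fun C hC => subset_convexHull ℝ _ ⟨C, hC, rfl⟩
  have hC₁m := hl ▸ hC₁S
  have hC₂m := hl ▸ hC₂S
  obtain ⟨hC₁A, hC₁max⟩ := hC₁m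
  obtain ⟨hC₂A, hC₂max⟩ := hC₂m
  have hD₁A := memPoly _ hD₁
  have hD₂A := memPoly _ hD₂
  have hval : l (indVec D₁) + l (indVec D₂) = l (indVec C₁) + l (indVec C₂) := by
    rw [← map_add, ← map_add, hsum]
  have heqc : l (indVec C₂) = l (indVec C₁) :=
    le_antisymm (hC₁max _ hC₂A) (hC₂max _ hC₁A)
  have hD₁ge : l (indVec C₁) ≤ l (indVec D₁) := by
    have h2 := hC₁max _ hD₂A
    linarith [hval, heqc]
  have hD₁max : ∀ y ∈ maxChainPolytope P, l y ≤ l (indVec D₁) :=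
    fun y hy => (hC₁max y hy).trans hD₁ge
  have hD₁S : indVec D₁ ∈ convexHull ℝ {indVec C₁, indVec C₂} := by
    rw [hl]; exact ⟨hD₁A, hD₁max⟩
  rw [convexHull_pair] at hD₁S
  obtain ⟨u, v, hu, hv, huv, heq⟩ := hD₁S
  obtain ⟨p, hp1, hp2⟩ : ∃ p, p ∈ C₁ ∧ p ∉ C₂ := by
    by_contra h
    push_neg at h
    exact hne (hC₁.2 hC₂.1 h)
  have hpt := congrFun heq p
  have h1 : indVec C₁ p = 1 := by simp [indVec, Set.indicator_of_mem hp1]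
  have h0 : indVec C₂ p = 0 := by simp [indVec, Set.indicator_of_notMem hp2]
  simp only [Pi.add_apply, Pi.smul_apply, h1, h0, smul_eq_mul, mul_one, mul_zero,
    add_zero] at hpt
  by_cases hpD : p ∈ D₁
  · have hu1 : u = 1 := by
      have : indVec D₁ p = 1 := by simp [indVec, Set.indicator_of_mem hpD]
      rw [this] at hpt; exact hpt.symm ▸ rfl
    have hv0 : v = 0 := by linarith
    rw [hu1, hv0, one_smul, zero_smul, add_zero] at heq
    exact hD₁ne₁ (indVec_inj heq.symm)
  · have hu0 : u = 0 := by
      have : indVec D₁ p = 0 := by simp [indVec, Set.indicator_of_notMem hpD]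
      rw [this] at hpt; linarith
    have hv1 : v = 1 := by linarith
    rw [hu0, hv1, one_smul, zero_smul, zero_add] at heq
    exact hD₁ne₂ (indVec_inj heq.symm)
end

section
/- Let P be a finite poset and C₁, C₂ distinct maximal chains. If {C₁, C₂} admits a guided ρ-crown for some ρ ≥ 2, then ρ = 2; that is, two maximal chains cannot support a guided ρ-crown with ρ ≥ 3. -/
theorem stmt_13 {P : Type*} [Fintype P] [PartialOrder P]
    (C₁ C₂ : Set P) (hC₁ : IsMaxChain (· ≤ ·) C₁) (hC₂ : IsMaxChain (· ≤ ·) C₂)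
    (hne : C₁ ≠ C₂) (ρ : ℕ) (hρ : 2 ≤ ρ)
    (α β : ZMod ρ → P)
    (hcov : ∀ i, α i ⋖ β i ∧ α i ⋖ β (i - 1))
    (hαinj : Function.Injective α) (hβinj : Function.Injective β)
    (hguide : ∀ i, ∃ C ∈ ({C₁, C₂} : Set (Set P)), α i ∈ C ∧ β i ∈ C) :
    ρ = 2 := by
  by_contra hρ2
  have hρ3 : 3 ≤ ρ := by omega
  haveI : NeZero ρ := ⟨by omega⟩
  -- basic index facts
  have h1ne : (1 : ZMod ρ) ≠ 0 := by
    have : ((1 : ℕ) : ZMod ρ) ≠ 0 := by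
      rw [Ne, ZMod.natCast_eq_zero_iff]
      intro h; have := Nat.le_of_dvd one_pos h; omega
    simpa using this
  have h2ne : (2 : ZMod ρ) ≠ 0 := by
    have : ((2 : ℕ) : ZMod ρ) ≠ 0 := by
      rw [Ne, ZMod.natCast_eq_zero_iff]
      intro h; have := Nat.le_of_dvd two_pos h; omega
    simpa using this
  have hchain : ∀ C ∈ ({C₁, C₂} : Set (Set P)), IsChain (· ≤ ·) C := by
    rintro C (rfl | rfl)
    · exact hC₁.1
    · exact hC₂.1
  -- α (i+1) < β i
  have hlt1 : ∀ i : ZMod ρ, α (i + 1) < β i := by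
    intro i
    have := (hcov (i + 1)).2
    simpa using this.lt
  -- Lemma A : consecutive pairs can't lie in a common chain
  have lemA : ∀ (i : ZMod ρ) (C : Set P), IsChain (· ≤ ·) C →
      α i ∈ C → α (i + 1) ∈ C → False := by
    intro i C hC hm1 hm2
    have hne' : α i ≠ α (i + 1) := by
      intro h
      have := hαinj h
      exact h1ne (by linear_combination -this)
    rcases hC hm1 hm2 hne' with h | h
    · exact ((hcov i).1).2 (lt_of_le_of_ne h hne') (hlt1 i)
    · have hc : α (i + 1) ⋖ β i := by
        have := (hcov (i + 1)).2
        simpa using this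
      exact hc.2 (lt_of_le_of_ne h (Ne.symm hne')) ((hcov i).1.lt)
  -- Lemma B : pairs i and i+2 share a chain
  have lemB : ∀ i : ZMod ρ, ∃ C, IsChain (· ≤ ·) C ∧
      α i ∈ C ∧ β i ∈ C ∧ α (i + 2) ∈ C ∧ β (i + 2) ∈ C := by
    intro i
    obtain ⟨C, hCm, hα0, hβ0⟩ := hguide i
    obtain ⟨C', hC'm, hα1, hβ1⟩ := hguide (i + 1)
    obtain ⟨C'', hC''m, hα2, hβ2⟩ := hguide (i + 2)
    have e2 : i + 1 + 1 = i + 2 := by ring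
    have hCC' : C ≠ C' := by
      rintro rfl; exact lemA i C (hchain C hCm) hα0 hα1
    have hC'C'' : C' ≠ C'' := by
      rintro rfl; exact lemA (i + 1) C' (hchain C' hC'm) hα1 (by rwa [e2])
    have hCC'' : C = C'' := by
      rcases hCm with rfl | rfl <;> rcases hC'm with rfl | rfl <;>
        rcases hC''m with rfl | rfl <;> first | rfl | (exfalso ; tauto)
    subst hCC''
    exact ⟨C, hchain C hCm, hα0, hβ0, hα2, hβ2⟩
  -- Lemma C : one of the two directions holds
  have lemC : ∀ i : ZMod ρ, β i ≤ α (i + 2) ∨ β (i + 2) ≤ α i := by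
    intro i
    obtain ⟨C, hC, hα0, hβ0, hα2, hβ2⟩ := lemB i
    have hne' : α i ≠ α (i + 2) := by
      intro h
      have := hαinj h
      exact h2ne (by linear_combination -this)
    rcases hC hα0 hα2 hne' with h | h
    · left
      have hlt : α i < α (i + 2) := lt_of_le_of_ne h hne'
      by_cases hbe : β i = α (i + 2)
      · exact le_of_eq hbe
      rcases hC hβ0 hα2 hbe with h' | h'
      · exact h'
      · exact absurd (((hcov i).1).2 hlt (lt_of_le_of_ne h' (Ne.symm hbe))) not_false
    · right
      have hlt : α (i + 2) < α i := lt_of_le_of_ne h (Ne.symm hne')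
      by_cases hbe : β (i + 2) = α i
      · exact le_of_eq hbe
      rcases hC hβ2 hα0 hbe with h' | h'
      · exact h'
      · exact absurd (((hcov (i + 2)).1).2 hlt (lt_of_le_of_ne h' (Ne.symm hbe))) not_false
  -- Lemma D : direction "up" propagates
  have lemD : ∀ i : ZMod ρ, β i ≤ α (i + 2) → β (i + 1) ≤ α (i + 1 + 2) := by
    intro i h
    rcases lemC (i + 1) with h' | h'
    · exact h'
    · exfalso
      have e : i + 1 + 2 = i + 2 + 1 := by ring
      rw [e] at h'
      have l1 : α (i + 2 + 1) < α (i + 1) :=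
        lt_of_lt_of_le ((hcov (i + 2 + 1)).1.lt) h'
      have l2 : α (i + 2 + 1) < α (i + 2) :=
        l1.trans (lt_of_lt_of_le (hlt1 i) h)
      have hc : α (i + 2 + 1) ⋖ β (i + 2) := by
        have := (hcov (i + 2 + 1)).2
        simpa using this
      exact hc.2 l2 ((hcov (i + 2)).1.lt)
  -- Lemma D'' : direction "down" propagates
  have lemD' : ∀ i : ZMod ρ, β (i + 2) ≤ α i → β (i + 1 + 2) ≤ α (i + 1) := by
    intro i h
    rcases lemC (i + 1) with h' | h'
    · exfalso
      -- h' : β (i + 1) ≤ α (i + 1 + 2)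
      have e : i + 1 + 2 = i + 2 + 1 := by ring
      rw [e] at h'
      have hc : α (i + 2 + 1) ⋖ β (i + 2) := by
        have := (hcov (i + 2 + 1)).2
        simpa using this
      have l1 : α (i + 1) < α (i + 2 + 1) :=
        lt_of_lt_of_le ((hcov (i + 1)).1.lt) h'
      have l2 : α (i + 1) < α i :=
        (l1.trans hc.lt).trans_le h
      have hc2 : α (i + 1) ⋖ β i := by
        have := (hcov (i + 1)).2
        simpa using this
      exact hc2.2 l2 ((hcov i).1.lt)
    · exact h'
  -- Conclude : the direction is constant, giving a strictly monotone cycle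
  have e2ρ : ((2 * ρ : ℕ) : ZMod ρ) = ((2 * 0 : ℕ) : ZMod ρ) := by
    push_cast
    simp [ZMod.natCast_self]
  rcases lemC 0 with h0 | h0
  · have hup : ∀ n : ℕ, β ((n : ZMod ρ)) ≤ α ((n : ZMod ρ) + 2) := by
      intro n
      induction n with
      | zero => simpa using h0
      | succ n ih =>
        have := lemD _ ih
        push_cast
        convert this using 2 <;> push_cast <;> ring
    have hf : StrictMono (fun n : ℕ => α ((2 * n : ℕ) : ZMod ρ)) := by
      apply strictMono_nat_of_lt_succ
      intro n
      have h1 := (hcov ((2 * n : ℕ) : ZMod ρ)).1.lt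
      have h2 := hup (2 * n)
      have e : ((2 * (n + 1) : ℕ) : ZMod ρ) = ((2 * n : ℕ) : ZMod ρ) + 2 := by
        push_cast; ring
      rw [e]
      exact h1.trans_le h2
    have := hf (show 0 < ρ by omega)
    exact absurd (congrArg α e2ρ) this.ne'
  · have hdn : ∀ n : ℕ, β ((n : ZMod ρ) + 2) ≤ α ((n : ZMod ρ)) := by
      intro n
      induction n with
      | zero => simpa using h0
      | succ n ih =>
        have := lemD' _ ih
        push_cast
        convert this using 2 <;> push_cast <;> ring
    have hf : StrictAnti (fun n : ℕ => α ((2 * n : ℕ) : ZMod ρ)) := by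
      apply strictAnti_nat_of_succ_lt
      intro n
      have h1 := (hcov (((2 * n : ℕ) : ZMod ρ) + 2)).1.lt
      have h2 := hdn (2 * n)
      have e : ((2 * (n + 1) : ℕ) : ZMod ρ) = ((2 * n : ℕ) : ZMod ρ) + 2 := by
        push_cast; ring
      rw [e]
      exact h1.trans_le h2
    have := hf (show 0 < ρ by omega)
    exact absurd (congrArg α e2ρ) this.ne
end

section
/- Let P be a finite poset and C₁, C₂ two maximal chains of P such that C₁ ∩ C₂ contains an element γ with γ neither the maximum nor the minimum of C₁ ∩ C₂ in the following sense: there exist α₁ ∈ C₁ \ C₂ with α₁ < γ, β₁ ∈ C₁ \ C₂ with γ < β₁, α₂ ∈ C₂ \ C₁ with α₂ < γ, and β₂ ∈ C₂ \ C₁ with γ < β₂ (a guided star through γ). Then C₁' = {z ∈ C₁ : z ≤ γ} ∪ {z ∈ C₂ : z > γ} and C₂' = {z ∈ C₂ : z ≤ γ} ∪ {z ∈ C₁ : z > γ} are maximal chains of P, and e_{C₁} + e_{C₂} = e_{C₁'} + e_{C₂'}. -/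
lemma cross_max {P : Type*} [PartialOrder P] (C₁ C₂ : Set P)
    (h1 : IsMaxChain (· ≤ ·) C₁) (h2 : IsMaxChain (· ≤ ·) C₂)
    (γ : P) (hγ₁ : γ ∈ C₁) (hγ₂ : γ ∈ C₂) :
    IsMaxChain (· ≤ ·) ({z ∈ C₁ | z ≤ γ} ∪ {z ∈ C₂ | γ < z}) := by
  constructor
  · rintro x (⟨hx, hxγ⟩ | ⟨hx, hγx⟩) y (⟨hy, hyγ⟩ | ⟨hy, hγy⟩) hne
    · exact h1.1 hx hy hne
    · exact Or.inl (hxγ.trans hγy.le)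
    · exact Or.inr (hyγ.trans hγx.le)
    · exact h2.1 hx hy hne
  · intro t ht hsub
    refine Set.Subset.antisymm hsub fun a ha => ?_
    have hcompt : ∀ b, b ∈ ({z ∈ C₁ | z ≤ γ} ∪ {z ∈ C₂ | γ < z}) → a ≤ b ∨ b ≤ a := by
      intro b hb
      rcases eq_or_ne a b with rfl | hne
      · exact Or.inl le_rfl
      · exact ht ha (hsub hb) hne
    have hγmem : γ ∈ ({z ∈ C₁ | z ≤ γ} ∪ {z ∈ C₂ | γ < z}) := Or.inl ⟨hγ₁, le_rfl⟩
    by_cases haγ : a ≤ γ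
    · -- show a ∈ C₁
      have hchain : IsChain (· ≤ ·) (insert a C₁) := by
        refine h1.1.insert fun b hb hne => ?_
        by_cases hbγ : b ≤ γ
        · exact hcompt b (Or.inl ⟨hb, hbγ⟩)
        · rcases h1.1 hγ₁ hb (fun h => hbγ (h ▸ le_rfl)) with h | h
          · exact Or.inl (haγ.trans h)
          · exact absurd h hbγ
      have : C₁ = insert a C₁ := h1.2 hchain (Set.subset_insert a C₁)
      exact Or.inl ⟨this ▸ Set.mem_insert a C₁, haγ⟩
    · have hγa : γ < a := by
        rcases hcompt γ hγmem with h | h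
        · exact absurd h haγ
        · exact lt_of_le_of_ne h (fun h' => haγ (h' ▸ le_rfl))
      have hchain : IsChain (· ≤ ·) (insert a C₂) := by
        refine h2.1.insert fun b hb hne => ?_
        by_cases hbγ : γ < b
        · exact hcompt b (Or.inr ⟨hb, hbγ⟩)
        · have hbleγ : b ≤ γ := by
            rcases eq_or_ne b γ with rfl | hne
            · exact le_rfl
            · rcases h2.1 hγ₂ hb (Ne.symm hne) with h | h
              · exact absurd (lt_of_le_of_ne h (Ne.symm hne)) hbγ
              · exact h
          exact Or.inr (hbleγ.trans hγa.le)
      have : C₂ = insert a C₂ := h2.2 hchain (Set.subset_insert a C₂)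
      exact Or.inr ⟨this ▸ Set.mem_insert a C₂, hγa⟩

theorem stmt_14 {P : Type*} [Fintype P] [PartialOrder P]
    (C₁ C₂ : Set P) (hC₁ : IsMaxChain (· ≤ ·) C₁) (hC₂ : IsMaxChain (· ≤ ·) C₂)
    (γ : P) (hγ₁ : γ ∈ C₁) (hγ₂ : γ ∈ C₂)
    (α₁ β₁ α₂ β₂ : P)
    (hα₁ : α₁ ∈ C₁ \ C₂) (hβ₁ : β₁ ∈ C₁ \ C₂) (hα₂ : α₂ ∈ C₂ \ C₁) (hβ₂ : β₂ ∈ C₂ \ C₁)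
    (hlt₁ : α₁ < γ) (hgt₁ : γ < β₁) (hlt₂ : α₂ < γ) (hgt₂ : γ < β₂) :
    IsMaxChain (· ≤ ·) ({z ∈ C₁ | z ≤ γ} ∪ {z ∈ C₂ | γ < z}) ∧
    IsMaxChain (· ≤ ·) ({z ∈ C₂ | z ≤ γ} ∪ {z ∈ C₁ | γ < z}) ∧
    indVec C₁ + indVec C₂ =
      indVec ({z ∈ C₁ | z ≤ γ} ∪ {z ∈ C₂ | γ < z}) +
      indVec ({z ∈ C₂ | z ≤ γ} ∪ {z ∈ C₁ | γ < z}) := by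
  refine ⟨cross_max C₁ C₂ hC₁ hC₂ γ hγ₁ hγ₂, cross_max C₂ C₁ hC₂ hC₁ γ hγ₂ hγ₁, ?_⟩
  funext p
  simp only [indVec, Pi.add_apply, Set.indicator_apply, Pi.one_apply, Set.mem_union,
    Set.mem_setOf_eq]
  by_cases hle : p ≤ γ
  · have hnlt : ¬ γ < p := fun h => h.not_ge hle
    by_cases h1 : p ∈ C₁ <;> by_cases h2 : p ∈ C₂ <;> simp [h1, h2, hle, hnlt] <;> ring
  · have hlt1 : p ∈ C₁ → γ < p := fun h1 => by
      rcases eq_or_ne p γ with rfl | hne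
      · exact absurd le_rfl hle
      · rcases hC₁.1 hγ₁ h1 (Ne.symm hne) with h | h
        · exact lt_of_le_of_ne h (Ne.symm hne)
        · exact absurd h hle
    have hlt2 : p ∈ C₂ → γ < p := fun h2 => by
      rcases eq_or_ne p γ with rfl | hne
      · exact absurd le_rfl hle
      · rcases hC₂.1 hγ₂ h2 (Ne.symm hne) with h | h
        · exact lt_of_le_of_ne h (Ne.symm hne)
        · exact absurd h hle
    by_cases h1 : p ∈ C₁ <;> by_cases h2 : p ∈ C₂ <;>
      simp [h1, h2, hle, hlt1, hlt2] <;> ring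
end

section
/- Let P be a finite poset, and suppose C₁, C₂, C₁', C₂' are maximal chains with e_{C₁} + e_{C₂} = e_{C₁'} + e_{C₂'} and {C₁', C₂'} ≠ {C₁, C₂}. If 𝒞 is a set of maximal chains containing C₁ and C₂ but not containing C₁' (or not containing C₂'), then conv{e_C : C ∈ 𝒞} is not a face of 𝓜(P). -/
open Classical in
lemma indVec_apply {P : Type*} (C : Set P) (p : P) :
    indVec C p = if p ∈ C then 1 else 0 := by
  simp [indVec, Set.indicator_apply]

open Classical in
lemma gsum_eval {P : Type*} [Fintype P] (a C : Set P) :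
    (∑ p, (indVec a p * 2 - 1) * indVec C p)
      = 2 * (C ∩ a).toFinset.card - C.toFinset.card := by
  classical
  have h : ∀ p : P, (indVec a p * 2 - 1) * indVec C p
      = (if p ∈ (C ∩ a).toFinset then (2:ℝ) else 0) - (if p ∈ C.toFinset then (1:ℝ) else 0) := by
    intro p
    simp only [indVec_apply, Set.mem_toFinset, Set.mem_inter_iff]
    by_cases h1 : p ∈ C <;> by_cases h2 : p ∈ a <;> simp [h1, h2]
  rw [Finset.sum_congr rfl (fun p _ => h p), Finset.sum_sub_distrib]
  rw [Finset.sum_ite_mem, Finset.sum_ite_mem, Finset.univ_inter, Finset.univ_inter]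
  simp [Finset.sum_const, mul_comm]

open Classical in
lemma gsum_bound {P : Type*} [Fintype P] [PartialOrder P] {a C : Set P}
    (ha : IsMaxChain (· ≤ ·) a) (hC : IsMaxChain (· ≤ ·) C) (hne : C ≠ a) :
    (∑ p, (indVec a p * 2 - 1) * indVec C p)
      ≤ (∑ p, (indVec a p * 2 - 1) * indVec a p) - 1 := by
  classical
  rw [gsum_eval, gsum_eval]
  have hsub : ¬ C ⊆ a := fun hs => hne (hC.2 ha.1 hs)
  have h1 : (C ∩ a).toFinset ⊂ C.toFinset := by
    rw [Finset.ssubset_iff_subset_ne]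
    constructor
    · intro p hp
      simp only [Set.mem_toFinset, Set.mem_inter_iff] at hp ⊢
      exact hp.1
    · intro h
      apply hsub
      intro p hp
      have : p ∈ (C ∩ a).toFinset := by rw [h]; simpa [Set.mem_toFinset]
      simp [Set.mem_toFinset] at this
      exact this.2
  have h2 : (C ∩ a).toFinset.card < C.toFinset.card := Finset.card_lt_card h1
  have h3 : (C ∩ a).toFinset.card ≤ a.toFinset.card := by
    apply Finset.card_le_card
    intro p hp; simp [Set.mem_toFinset] at hp ⊢; exact hp.2
  have h4 : (a ∩ a).toFinset.card = a.toFinset.card := by simp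
  rw [h4]
  have h2' : (C ∩ a).toFinset.card + 1 ≤ C.toFinset.card := h2
  have r3 := (Nat.cast_le (α := ℝ)).2 h3
  have r2 := (Nat.cast_le (α := ℝ)).2 h2'
  push_cast at r2 r3
  linarith

lemma vertex_not_mem {P : Type*} [Fintype P] [PartialOrder P] {a : Set P}
    (ha : IsMaxChain (· ≤ ·) a) {𝒞 : Set (Set P)}
    (h1 : ∀ C ∈ 𝒞, IsMaxChain (· ≤ ·) C) (hnot : a ∉ 𝒞) :
    indVec a ∉ convexHull ℝ (indVec '' 𝒞) := by
  classical
  set g : (P → ℝ) → ℝ := fun y => ∑ p, (indVec a p * 2 - 1) * y p with hg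
  have hlin : IsLinearMap ℝ g := by
    constructor
    · intro x y
      simp [hg, mul_add, Finset.sum_add_distrib]
    · intro c x
      simp [hg, Finset.mul_sum, mul_left_comm]
  intro hmem
  have hhull : convexHull ℝ (indVec '' 𝒞) ⊆ {y | g y ≤ g (indVec a) - 1} := by
    apply convexHull_min
    · rintro y ⟨C, hC, rfl⟩
      have : C ≠ a := fun h => hnot (h ▸ hC)
      exact gsum_bound ha (h1 C hC) this
    · exact convex_halfSpace_le hlin _
  have := hhull hmem
  simp only [Set.mem_setOf_eq] at this
  linarith

lemma aux_main {P : Type*} [Fintype P] [PartialOrder P]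
    (C₁ C₂ C₁' C₂' : Set P)
    (hC₁' : IsMaxChain (· ≤ ·) C₁') (hC₂' : IsMaxChain (· ≤ ·) C₂')
    (hsum : indVec C₁ + indVec C₂ = indVec C₁' + indVec C₂')
    (𝒞 : Set (Set P)) (h1 : ∀ C ∈ 𝒞, IsMaxChain (· ≤ ·) C)
    (hC₁𝒞 : C₁ ∈ 𝒞) (hC₂𝒞 : C₂ ∈ 𝒞) (hmiss : C₁' ∉ 𝒞) :
    ¬ IsExposed ℝ (maxChainPolytope P) (convexHull ℝ (indVec '' 𝒞)) := by
  intro hexp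
  set B := convexHull ℝ (indVec '' 𝒞) with hB
  have m1 : indVec C₁ ∈ B := subset_convexHull ℝ _ ⟨C₁, hC₁𝒞, rfl⟩
  have m2 : indVec C₂ ∈ B := subset_convexHull ℝ _ ⟨C₂, hC₂𝒞, rfl⟩
  obtain ⟨l, hl⟩ := hexp ⟨_, m1⟩
  have a1 : indVec C₁' ∈ maxChainPolytope P :=
    subset_convexHull ℝ _ ⟨C₁', hC₁', rfl⟩
  have a2 : indVec C₂' ∈ maxChainPolytope P :=
    subset_convexHull ℝ _ ⟨C₂', hC₂', rfl⟩
  set x : P → ℝ := (1/2 : ℝ) • indVec C₁ + (1/2 : ℝ) • indVec C₂ with hx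
  have hxB : x ∈ B :=
    convex_convexHull ℝ _ m1 m2 (by norm_num) (by norm_num) (by norm_num)
  have hxmax : x ∈ maxChainPolytope P ∧ ∀ y ∈ maxChainPolytope P, l y ≤ l x := by
    rw [hl] at hxB; exact hxB
  have hx' : x = (1/2 : ℝ) • indVec C₁' + (1/2 : ℝ) • indVec C₂' := by
    rw [hx, ← smul_add, ← smul_add, hsum]
  have hlx : l x = (1/2 : ℝ) * l (indVec C₁') + (1/2 : ℝ) * l (indVec C₂') := by
    rw [hx']; simp
  have h2' : l (indVec C₂') ≤ l x := hxmax.2 _ a2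
  have h1' : l x ≤ l (indVec C₁') := by linarith
  have : indVec C₁' ∈ B := by
    rw [hl]
    exact ⟨a1, fun y hy => le_trans (hxmax.2 y hy) h1'⟩
  exact vertex_not_mem hC₁' h1 hmiss this

theorem stmt_15 {P : Type*} [Fintype P] [PartialOrder P]
    (C₁ C₂ C₁' C₂' : Set P)
    (hC₁ : IsMaxChain (· ≤ ·) C₁) (hC₂ : IsMaxChain (· ≤ ·) C₂)
    (hC₁' : IsMaxChain (· ≤ ·) C₁') (hC₂' : IsMaxChain (· ≤ ·) C₂')
    (hsum : indVec C₁ + indVec C₂ = indVec C₁' + indVec C₂')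
    (hne : ({C₁', C₂'} : Set (Set P)) ≠ {C₁, C₂})
    (𝒞 : Set (Set P)) (h1 : ∀ C ∈ 𝒞, IsMaxChain (· ≤ ·) C)
    (hC₁𝒞 : C₁ ∈ 𝒞) (hC₂𝒞 : C₂ ∈ 𝒞) (hmiss : C₁' ∉ 𝒞 ∨ C₂' ∉ 𝒞) :
    ¬ IsExposed ℝ (maxChainPolytope P) (convexHull ℝ (indVec '' 𝒞)) := by
  rcases hmiss with h | h
  · exact aux_main C₁ C₂ C₁' C₂' hC₁' hC₂' hsum 𝒞 h1 hC₁𝒞 hC₂𝒞 h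
  · exact aux_main C₁ C₂ C₂' C₁' hC₂' hC₁' (by rw [hsum, add_comm]) 𝒞 h1 hC₁𝒞 hC₂𝒞 h
end

section
/- Let P be a finite poset and let f : P → ℝ maximize, over maximal chains D, the value f(D) = Σ_{x∈D} f(x) exactly on a set 𝒞 of maximal chains. Suppose (α₁, β₁, …, α_ρ, β_ρ) is a guided ρ-crown of 𝒞 with chosen chains C_i ∈ 𝒞 containing α_i, β_i. Then for every i, the maximal chain D_i = {z ∈ C_i : z ≤ α_i} ∪ {z ∈ C_{i−1} : z ≥ β_{i−1}} (indices mod ρ) also attains the maximum value, i.e., f(D_i) = f(C_1). -/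
noncomputable def chainSum {P : Type*} [Fintype P] (f : P → ℝ) (C : Set P) : ℝ :=
  ∑ x, C.indicator f x

lemma chainSum_union {P : Type*} [Fintype P] (f : P → ℝ) {A B : Set P}
    (h : Disjoint A B) : chainSum f (A ∪ B) = chainSum f A + chainSum f B := by
  unfold chainSum
  rw [Set.indicator_union_of_disjoint h, Finset.sum_add_distrib]

theorem stmt_16 {P : Type*} [Fintype P] [PartialOrder P]
    (f : P → ℝ) (𝒞 : Set (Set P)) (h1 : ∀ C ∈ 𝒞, IsMaxChain (· ≤ ·) C)
    (hmax : ∀ D : Set P, IsMaxChain (· ≤ ·) D →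
      (D ∈ 𝒞 ↔ ∀ D' : Set P, IsMaxChain (· ≤ ·) D' → chainSum f D' ≤ chainSum f D))
    (ρ : ℕ) (hρ : 2 ≤ ρ) (α β : ZMod ρ → P) (C : ZMod ρ → Set P)
    (hC : ∀ i, C i ∈ 𝒞) (hαC : ∀ i, α i ∈ C i) (hβC : ∀ i, β i ∈ C i)
    (hcov : ∀ i, α i ⋖ β i ∧ α i ⋖ β (i - 1))
    (hαinj : Function.Injective α) (hβinj : Function.Injective β) :
    ∀ i, chainSum f ({z ∈ C i | z ≤ α i} ∪ {z ∈ C (i - 1) | β (i - 1) ≤ z}) =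
      chainSum f (C i) := by
  haveI : NeZero ρ := ⟨by omega⟩
  -- every element of C i is below α i or above β i
  have hpart : ∀ i, ∀ w ∈ C i, w ≤ α i ∨ β i ≤ w := by
    intro i w hw
    rcases (h1 _ (hC i)).1.total hw (hαC i) with h | h
    · exact Or.inl h
    rcases eq_or_lt_of_le h with rfl | hlt
    · exact Or.inl le_rfl
    rcases (h1 _ (hC i)).1.total hw (hβC i) with h' | h'
    · rcases eq_or_lt_of_le h' with rfl | hlt'
      · exact Or.inr le_rfl
      · exact absurd hlt' ((hcov i).1.2 hlt)
    · exact Or.inr h'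
  set L : ZMod ρ → Set P := fun i => {z ∈ C i | z ≤ α i} with hL
  set U : ZMod ρ → Set P := fun i => {z ∈ C i | β i ≤ z} with hU
  have hdisj : ∀ i j, α i < β j → Disjoint (L i) (U j) := by
    intro i j hij
    rw [Set.disjoint_left]
    rintro z ⟨_, hz1⟩ ⟨_, hz2⟩
    exact hij.not_ge (hz2.trans hz1)
  have hCsplit : ∀ i, C i = L i ∪ U i := by
    intro i
    ext z
    constructor
    · intro hz
      rcases hpart i z hz with h | h
      · exact Or.inl ⟨hz, h⟩
      · exact Or.inr ⟨hz, h⟩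
    · rintro (⟨hz, _⟩ | ⟨hz, _⟩) <;> exact hz
  -- D i is a maximal chain
  have hDmax : ∀ i, IsMaxChain (· ≤ ·) (L i ∪ U (i - 1)) := by
    intro i
    have hαβ : α i < β (i - 1) := (hcov i).2.1
    constructor
    · rintro x (⟨hx, hx'⟩ | ⟨hx, hx'⟩) y (⟨hy, hy'⟩ | ⟨hy, hy'⟩) hxy
      · exact (h1 _ (hC i)).1 hx hy hxy
      · exact Or.inl (hx'.trans (le_of_lt (lt_of_lt_of_le hαβ hy')))
      · exact Or.inr (hy'.trans (le_of_lt (lt_of_lt_of_le hαβ hx')))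
      · exact (h1 _ (hC (i - 1))).1 hx hy hxy
    · intro t ht hsub
      refine Set.Subset.antisymm hsub (fun z hz => ?_)
      have hcmp : ∀ w ∈ L i ∪ U (i - 1), w = z ∨ w ≤ z ∨ z ≤ w := by
        intro w hw
        by_cases hwz : w = z
        · exact Or.inl hwz
        · exact Or.inr (ht (hsub hw) hz hwz)
      have hα : α i ∈ L i ∪ U (i - 1) := Or.inl ⟨hαC i, le_rfl⟩
      have hβ' : β (i - 1) ∈ L i ∪ U (i - 1) := Or.inr ⟨hβC (i - 1), le_rfl⟩
      by_cases h1' : z ≤ α i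
      · -- z joins C i
        have : C i ∪ {z} = C i := by
          refine ((h1 _ (hC i)).2 ?_ Set.subset_union_left).symm
          rintro x (hx | rfl) y (hy | rfl) hxy
          · exact (h1 _ (hC i)).1 hx hy hxy
          · -- x ∈ C i, y = z
            rcases hpart i x hx with hx' | hx'
            · rcases hcmp x (Or.inl ⟨hx, hx'⟩) with rfl | h | h
              · exact absurd rfl hxy
              · exact Or.inl h
              · exact Or.inr h
            · exact Or.inr (h1'.trans (((hcov i).1.1.le).trans hx'))
          · rcases hpart i y hy with hy' | hy'
            · rcases hcmp y (Or.inl ⟨hy, hy'⟩) with rfl | h | h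
              · exact absurd rfl hxy
              · exact Or.inr h
              · exact Or.inl h
            · exact Or.inl (h1'.trans (((hcov i).1.1.le).trans hy'))
          · exact absurd rfl hxy
        have hzC : z ∈ C i := this ▸ Or.inr rfl
        exact Or.inl ⟨hzC, h1'⟩
      · by_cases h2' : β (i - 1) ≤ z
        · -- z joins C (i-1)
          have : C (i - 1) ∪ {z} = C (i - 1) := by
            refine ((h1 _ (hC (i - 1))).2 ?_ Set.subset_union_left).symm
            rintro x (hx | rfl) y (hy | rfl) hxy
            · exact (h1 _ (hC (i - 1))).1 hx hy hxy
            · rcases hpart (i - 1) x hx with hx' | hx'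
              · exact Or.inl (hx'.trans (((hcov (i - 1)).1.1.le).trans h2'))
              · rcases hcmp x (Or.inr ⟨hx, hx'⟩) with rfl | h | h
                · exact absurd rfl hxy
                · exact Or.inl h
                · exact Or.inr h
            · rcases hpart (i - 1) y hy with hy' | hy'
              · exact Or.inr (hy'.trans (((hcov (i - 1)).1.1.le).trans h2'))
              · rcases hcmp y (Or.inr ⟨hy, hy'⟩) with rfl | h | h
                · exact absurd rfl hxy
                · exact Or.inr h
                · exact Or.inl h
            · exact absurd rfl hxy
          have hzC : z ∈ C (i - 1) := this ▸ Or.inr rfl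
          exact Or.inr ⟨hzC, h2'⟩
        · exfalso
          have hz1 : α i < z := by
            rcases hcmp (α i) hα with rfl | h | h
            · exact absurd le_rfl h1'
            · exact lt_of_le_of_ne h (fun he => h1' (he ▸ le_rfl))
            · exact absurd h h1'
          have hz2 : z < β (i - 1) := by
            rcases hcmp (β (i - 1)) hβ' with rfl | h | h
            · exact absurd le_rfl h2'
            · exact absurd h h2'
            · exact lt_of_le_of_ne h (fun he => h2' (he ▸ le_rfl))
          exact (hcov i).2.2 hz1 hz2
  -- values
  have hsplit : ∀ i, chainSum f (C i) = chainSum f (L i) + chainSum f (U i) := by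
    intro i
    rw [hCsplit i, chainSum_union f (hdisj i i (hcov i).1.1)]
  have hDval : ∀ i, chainSum f (L i ∪ U (i - 1)) =
      chainSum f (L i) + chainSum f (U (i - 1)) := fun i =>
    chainSum_union f (hdisj i (i - 1) (hcov i).2.1)
  have hle : ∀ i, chainSum f (L i ∪ U (i - 1)) ≤ chainSum f (C i) :=
    fun i => ((hmax _ (h1 _ (hC i))).mp (hC i)) _ (hDmax i)
  have hsum : ∑ i : ZMod ρ, chainSum f (L i ∪ U (i - 1)) =
      ∑ i : ZMod ρ, chainSum f (C i) := by
    simp only [hDval, hsplit, Finset.sum_add_distrib]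
    congr 1
    exact Fintype.sum_equiv (Equiv.subRight (1 : ZMod ρ)) _ _ (fun i => rfl)
  have key := (Finset.sum_eq_sum_iff_of_le
    (fun i _ => hle i)).mp hsum
  intro i
  exact key i (Finset.mem_univ i)
end

section
/- The dimension of the maximal chain polytope 𝓜([m] × [n]) of the product of two chains [m] and [n] equals (m−1)(n−1). In particular, for m = n = 3, 𝓜([3] × [3]) ⊂ ℝ^9 has dimension 4. -/
/-!
Every maximal chain of `Fin (m + 1) × Fin (n + 1)` meets each antidiagonal `p.1 + p.2 = k`
exactly once, so all antidiagonal sums of its indicator vector equal `1`. Hence the polytope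
spans a translate of the kernel of the surjective antidiagonal-sum map
`ℝ^{(m+1)(n+1)} → ℝ^{m+n+1}`, which has dimension `m * n`. Conversely, a maximal chain through
`(i, j) < (i, j + 1) < (i + 1, j + 1)` can be flipped to pass through `(i + 1, j)` instead;
this changes its indicator vector by `e (i, j + 1) - e (i + 1, j)`, and these `m * n`
differences are linearly independent.
-/

open Finset Module

section StrictMono

variable {α β : Type*} [PartialOrder α] [LinearOrder β] {f : α → β} {C : Set α}
  {a b c d p q : α}

lemma IsChain.le_of_map_le (hC : IsChain (· ≤ ·) C) (hf : StrictMono f) (hp : p ∈ C)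
    (hq : q ∈ C) (h : f p ≤ f q) : p ≤ q :=
  (hC.total hp hq).elim id fun hqp ↦
    hqp.lt_or_eq.elim (fun hlt ↦ absurd h (hf hlt).not_ge) Eq.ge

lemma IsChain.injOn_of_strictMono (hC : IsChain (· ≤ ·) C) (hf : StrictMono f) :
    Set.InjOn f C := fun _ hp _ hq h ↦
  (hC.le_of_map_le hf hp hq h.le).antisymm (hC.le_of_map_le hf hq hp h.ge)

lemma IsChain.isMaxChain_of_forall_exists_map_eq (hC : IsChain (· ≤ ·) C) (hf : StrictMono f)
    (hCf : ∀ x, ∃ p ∈ C, f p = f x) : IsMaxChain (· ≤ ·) C := by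
  refine ⟨hC, fun t ht hCt ↦ hCt.antisymm fun x hx ↦ ?_⟩
  obtain ⟨p, hp, hpx⟩ := hCf x
  rwa [ht.injOn_of_strictMono hf hx (hCt hp) hpx.symm]

lemma IsMaxChain.mem_of_forall_le_or_le (hC : IsMaxChain (· ≤ ·) C)
    (hq : ∀ p ∈ C, q ≤ p ∨ p ≤ q) : q ∈ C :=
  (hC.2 (hC.1.insert fun p hp _ ↦ hq p hp) (Set.subset_insert _ _)).symm ▸ Set.mem_insert _ _

lemma IsChain.isMaxChain_insert_diff_singleton (hC : IsChain (· ≤ ·) C) (hf : StrictMono f)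
    (hCf : ∀ x, ∃ p ∈ C, f p = f x) (ha : a ∈ C) (hb : b ∈ C) (hd : d ∈ C)
    (hac : a ≤ c) (hcd : c ≤ d) (hbc : f b = f c) (hfac : f a ⋖ f c) (hfcd : f c ⋖ f d) :
    IsMaxChain (· ≤ ·) (insert c (C \ {b})) := by
  have hchain : IsChain (· ≤ ·) (insert c (C \ {b})) := by
    refine (hC.mono Set.sdiff_subset).insert fun p ⟨hp, hpb⟩ _ ↦ ?_
    have hpc : f p ≠ f c := fun h ↦ hpb (hC.injOn_of_strictMono hf hp hb (h.trans hbc.symm))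
    rcases hpc.lt_or_gt with h | h
    · exact Or.inr ((hC.le_of_map_le hf hp ha (hfac.le_of_lt h)).trans hac)
    · exact Or.inl (hcd.trans (hC.le_of_map_le hf hd hp (hfcd.ge_of_gt h)))
  refine hchain.isMaxChain_of_forall_exists_map_eq hf fun x ↦ ?_
  obtain ⟨p, hp, hpx⟩ := hCf x
  by_cases hpb : p = b
  · exact ⟨c, Set.mem_insert _ _, hbc.symm.trans (hpb ▸ hpx)⟩
  · exact ⟨p, Set.mem_insert_of_mem _ ⟨hp, hpb⟩, hpx⟩

end StrictMono

lemma indicator_sub_indicator_insert_diff {α : Type*} [DecidableEq α] {s : Set α} {a b : α}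
    (ha : a ∈ s) (hb : b ∉ s) :
    s.indicator (1 : α → ℝ) - (insert b (s \ {a})).indicator 1 =
      Pi.single a 1 - Pi.single b 1 := by
  classical
  funext x
  simp only [Pi.sub_apply, Set.indicator_apply, Set.mem_insert_iff, Set.mem_sdiff,
    Set.mem_singleton_iff, Pi.single_apply, Pi.one_apply]
  split_ifs <;> simp_all

lemma vectorSpan_le_ker_of_forall_eq {R V W : Type*} [Ring R] [AddCommGroup V] [Module R V]
    [AddCommGroup W] [Module R W] {s : Set V} (φ : V →ₗ[R] W) {w : W}
    (h : ∀ x ∈ s, φ x = w) : vectorSpan R s ≤ LinearMap.ker φ := by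
  rw [vectorSpan_def, Submodule.span_le]
  rintro _ ⟨x, hx, y, hy, rfl⟩
  simp [h x hx, h y hy]

section SumOver

variable {P Q : Type*} [Fintype P]

noncomputable def sumOver (R : Q → P → Prop) [∀ q, DecidablePred (R q)] :
    (P → ℝ) →ₗ[ℝ] (Q → ℝ) where
  toFun v q := ∑ p with R q p, v p
  map_add' u v := by funext q; simp [sum_add_distrib]
  map_smul' c v := by funext q; simp [mul_sum]

lemma sumOver_single [DecidableEq P] (R : Q → P → Prop) [∀ q, DecidablePred (R q)] (p : P)
    (c : ℝ) (q : Q) : sumOver R (Pi.single p c) q = if R q p then c else 0 := by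
  simp [sumOver, sum_pi_single']

variable [DecidableEq Q] {f : P → Q}

lemma sumOver_fiber_surjective [Fintype Q] (hf : Function.Surjective f) :
    Function.Surjective (sumOver fun q p ↦ f p = q) := by
  classical
  intro g
  refine ⟨∑ q, Pi.single (Function.surjInv hf q) (g q), funext fun q ↦ ?_⟩
  simp [map_sum, sumOver_single, Function.surjInv_eq hf]

lemma finrank_ker_sumOver_fiber_add_card [Fintype Q] (hf : Function.Surjective f) :
    finrank ℝ (LinearMap.ker (sumOver fun q p ↦ f p = q)) + Fintype.card Q =
      Fintype.card P := by
  have := LinearMap.finrank_range_add_finrank_ker (sumOver fun q p ↦ f p = q)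
  rw [LinearMap.range_eq_top.2 (sumOver_fiber_surjective hf), finrank_top,
    finrank_fintype_fun_eq_card, finrank_fintype_fun_eq_card] at this
  omega

lemma sumOver_fiber_indicator {C : Set P} (hC : Set.BijOn f C Set.univ) :
    sumOver (fun q p ↦ f p = q) (C.indicator 1) = 1 := by
  classical
  funext q
  obtain ⟨p, hp, rfl⟩ := hC.surjOn (Set.mem_univ q)
  refine (sum_eq_single_of_mem p (by simp) fun p' hp' hne ↦ ?_).trans (by simp [hp])
  refine Set.indicator_of_notMem (fun hp'C ↦ hne ?_) _
  exact hC.injOn hp'C hp (mem_filter.1 hp').2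

end SumOver

section Grid

variable {m n : ℕ}

def gridLevel (p : Fin (m + 1) × Fin (n + 1)) : Fin (m + n + 1) :=
  ⟨p.1 + p.2, by omega⟩

@[simp] lemma val_gridLevel (p : Fin (m + 1) × Fin (n + 1)) :
    (gridLevel p : ℕ) = p.1 + p.2 := rfl

lemma gridLevel_strictMono : StrictMono (gridLevel (m := m) (n := n)) := by
  intro p q h
  rcases Prod.lt_iff.1 h with ⟨h1, h2⟩ | ⟨h1, h2⟩ <;>
  · simp only [Fin.lt_def, Fin.le_def, val_gridLevel] at *
    omega

lemma gridLevel_surjective : Function.Surjective (gridLevel (m := m) (n := n)) := fun k ↦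
  ⟨(⟨min (k : ℕ) m, by omega⟩, ⟨k - min (k : ℕ) m, by omega⟩), Fin.ext (by simp)⟩

@[simp] lemma gridLevel_bot : gridLevel (⊥ : Fin (m + 1) × Fin (n + 1)) = ⊥ :=
  Fin.ext (by simp [bot_eq_zero])
@[simp] lemma gridLevel_top : gridLevel (⊤ : Fin (m + 1) × Fin (n + 1)) = ⊤ :=
  Fin.ext (by simp [Fin.top_eq_last])

lemma exists_gridLevel_eq_of_le {p q : Fin (m + 1) × Fin (n + 1)} (hpq : p ≤ q)
    {k : Fin (m + n + 1)} (hpk : gridLevel p ≤ k) (hkq : k ≤ gridLevel q) :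
    ∃ z, p ≤ z ∧ z ≤ q ∧ gridLevel z = k := by
  obtain ⟨h1, h2⟩ := hpq
  rw [Fin.le_def, val_gridLevel] at hpk hkq
  rw [Fin.le_def] at h1 h2
  refine ⟨(⟨min (q.1 : ℕ) (k - p.2), by omega⟩, ⟨k - min (q.1 : ℕ) (k - p.2), by omega⟩),
    ?_, ?_, ?_⟩
  all_goals simp only [Prod.le_def, Fin.le_def, Fin.ext_iff, val_gridLevel]; omega

lemma IsMaxChain.exists_gridLevel_eq {C : Set (Fin (m + 1) × Fin (n + 1))}
    (hC : IsMaxChain (· ≤ ·) C) (k : Fin (m + n + 1)) : ∃ p ∈ C, gridLevel p = k := by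
  obtain ⟨a, ⟨haC, hak⟩, ha⟩ := Set.exists_max_image {p ∈ C | gridLevel p ≤ k} gridLevel
    (Set.toFinite _) ⟨⊥, hC.bot_mem, by simp⟩
  obtain ⟨b, ⟨hbC, hkb⟩, hb⟩ := Set.exists_min_image {p ∈ C | k ≤ gridLevel p} gridLevel
    (Set.toFinite _) ⟨⊤, hC.top_mem, by simp⟩
  have hle {p q} (hp : p ∈ C) (hq : q ∈ C) : gridLevel p ≤ gridLevel q → p ≤ q :=
    hC.1.le_of_map_le gridLevel_strictMono hp hq
  -- A point of level `k` between the highest element of `C` below level `k` and the lowest one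
  -- above is comparable with all of `C`, hence lies in `C`.
  obtain ⟨z, haz, hzb, rfl⟩ :=
    exists_gridLevel_eq_of_le (hle haC hbC (hak.trans hkb)) hak hkb
  refine ⟨z, hC.mem_of_forall_le_or_le fun p hp ↦ ?_, rfl⟩
  rcases le_total (gridLevel p) (gridLevel z) with h | h
  · exact Or.inr ((hle hp haC (ha p ⟨hp, h⟩)).trans haz)
  · exact Or.inl (hzb.trans (hle hbC hp (hb p ⟨hp, h⟩)))

lemma IsMaxChain.bijOn_gridLevel {C : Set (Fin (m + 1) × Fin (n + 1))}
    (hC : IsMaxChain (· ≤ ·) C) : Set.BijOn gridLevel C Set.univ :=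
  ⟨Set.mapsTo_univ _ _, hC.1.injOn_of_strictMono gridLevel_strictMono,
    fun k _ ↦ hC.exists_gridLevel_eq k⟩

lemma exists_isMaxChain_indVec_sub_indVec (i : Fin m) (j : Fin n) :
    ∃ C C' : Set (Fin (m + 1) × Fin (n + 1)), IsMaxChain (· ≤ ·) C ∧ IsMaxChain (· ≤ ·) C' ∧
      indVec C - indVec C' =
        Pi.single (i.castSucc, j.succ) 1 - Pi.single (i.succ, j.castSucc) 1 := by
  have hi := Fin.castSucc_le_succ i
  have hj := Fin.castSucc_le_succ j
  obtain ⟨C, hC, hsub⟩ : ∃ C, IsMaxChain (· ≤ ·) C ∧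
      {(i.castSucc, j.castSucc), (i.castSucc, j.succ), (i.succ, j.succ)} ⊆ C := by
    refine IsChain.exists_maxChain ((IsChain.singleton.insert ?_).insert ?_)
    · simp [Prod.le_def, hi]
    · simp [Prod.le_def, hi, hj]
  simp only [Set.insert_subset_iff, Set.singleton_subset_iff] at hsub
  obtain ⟨hlo, hleft, hhi⟩ := hsub
  have hlevel : gridLevel (i.castSucc, j.succ) = gridLevel (i.succ, j.castSucc) :=
    Fin.ext (by simp; omega)
  have hright : (i.succ, j.castSucc) ∉ C := fun h ↦ by
    simpa [Fin.ext_iff] using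
      hC.1.injOn_of_strictMono gridLevel_strictMono h hleft hlevel.symm
  refine ⟨C, _, hC, hC.1.isMaxChain_insert_diff_singleton (c := (i.succ, j.castSucc))
    gridLevel_strictMono (fun _ ↦ hC.exists_gridLevel_eq _) hlo hleft hhi ⟨hi, le_rfl⟩
    ⟨le_rfl, hj⟩ hlevel ?_ ?_,
    indicator_sub_indicator_insert_diff hleft hright⟩
  all_goals simp [Fin.covBy_iff]; omega

noncomputable def cornerDiff (x : Fin m × Fin n) : Fin (m + 1) × Fin (n + 1) → ℝ :=
  Pi.single (x.1.castSucc, x.2.succ) 1 - Pi.single (x.1.succ, x.2.castSucc) 1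

lemma linearIndependent_cornerDiff : LinearIndependent ℝ (cornerDiff (m := m) (n := n)) := by
  classical
  -- Partial antidiagonal sums `∑ {p | p.1 ≤ i, p.1 + p.2 = i + j + 1}` send `cornerDiff (i, j)`
  -- to the basis vector at `(i, j)`.
  refine .of_comp (sumOver fun (x : Fin m × Fin n) (p : Fin (m + 1) × Fin (n + 1)) ↦
    p.1 ≤ x.1.castSucc ∧ gridLevel p = gridLevel (x.1.castSucc, x.2.succ)) ?_
  convert Pi.linearIndependent_single_one (Fin m × Fin n) ℝ with x
  funext y
  simp only [Function.comp_apply, cornerDiff, map_sub, Pi.sub_apply, sumOver_single,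
    Pi.single_apply, Prod.ext_iff, Fin.ext_iff, Fin.le_def, val_gridLevel]
  split_ifs <;> simp_all <;> omega

lemma card_le_finrank_vectorSpan_maxChains :
    m * n ≤ finrank ℝ (vectorSpan ℝ
      (indVec '' {C : Set (Fin (m + 1) × Fin (n + 1)) | IsMaxChain (· ≤ ·) C})) := by
  have hspan : Submodule.span ℝ (Set.range cornerDiff) ≤ vectorSpan ℝ
      (indVec '' {C : Set (Fin (m + 1) × Fin (n + 1)) | IsMaxChain (· ≤ ·) C}) := by
    rw [Submodule.span_le]
    rintro _ ⟨⟨i, j⟩, rfl⟩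
    obtain ⟨C, C', hC, hC', hCC'⟩ := exists_isMaxChain_indVec_sub_indVec i j
    rw [cornerDiff, ← hCC']
    exact vsub_mem_vectorSpan ℝ ⟨C, hC, rfl⟩ ⟨C', hC', rfl⟩
  have := Submodule.finrank_mono hspan
  rwa [finrank_span_eq_card linearIndependent_cornerDiff, Fintype.card_prod, Fintype.card_fin,
    Fintype.card_fin] at this

lemma finrank_vectorSpan_maxChains_le :
    finrank ℝ (vectorSpan ℝ
      (indVec '' {C : Set (Fin (m + 1) × Fin (n + 1)) | IsMaxChain (· ≤ ·) C})) ≤ m * n := by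
  have hker := vectorSpan_le_ker_of_forall_eq (sumOver fun k p ↦ gridLevel p = k) (w := 1)
    (s := indVec '' {C : Set (Fin (m + 1) × Fin (n + 1)) | IsMaxChain (· ≤ ·) C})
    (by rintro _ ⟨C, hC, rfl⟩; exact sumOver_fiber_indicator hC.bijOn_gridLevel)
  have hcard := finrank_ker_sumOver_fiber_add_card (gridLevel_surjective (m := m) (n := n))
  simp only [Fintype.card_prod, Fintype.card_fin] at hcard
  have := Submodule.finrank_mono hker
  nlinarith

end Grid

theorem stmt_18 (m n : ℕ) (hm : 1 ≤ m) (hn : 1 ≤ n) :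
    Module.finrank ℝ (vectorSpan ℝ (maxChainPolytope (Fin m × Fin n))) =
      (m - 1) * (n - 1) := by
  obtain ⟨m, rfl⟩ := Nat.exists_eq_add_of_le' hm
  obtain ⟨n, rfl⟩ := Nat.exists_eq_add_of_le' hn
  rw [maxChainPolytope, ← direction_affineSpan, affineSpan_convexHull, direction_affineSpan,
    Nat.add_sub_cancel, Nat.add_sub_cancel]
  exact finrank_vectorSpan_maxChains_le.antisymm card_le_finrank_vectorSpan_maxChains
end
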